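/- Log-Sobolev inequality for the colored exclusion process (lower bound on regular graphs): let κ = (κ_1,…,κ_L) with L ≥ 2, let H be a simple d-regular graph on vertex set [n] with d ≥ 1, and define G_{ij} = 1/d if {i,j} is an edge of H and G_{ij} = 0 otherwise. If τ ∈ ℝ satisfies Ent_κ(f) ≤ τ·𝔈^G_κ(√f, √f) for all f : Ω_κ → [0,∞), then τ ≥ log(n/κ_min). -/

import Mathlib

open Finset

namespace Multislice

/-- The multislice `Ω_κ`: sequences of length `n` with values in `Fin L`
in which color `ℓ` appears exactly `κ ℓ` times. -/
def slice (L n : ℕ) (κ : Fin L → ℕ) : Finset (Fin n → Fin L) :=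
  Finset.univ.filter fun ω => ∀ ℓ, (Finset.univ.filter fun i => ω i = ℓ).card = κ ℓ

/-- Average of `f` with respect to the uniform distribution on `Ω`. -/
noncomputable def expect {L n : ℕ} (Ω : Finset (Fin n → Fin L))
    (f : (Fin n → Fin L) → ℝ) : ℝ :=
  (∑ ω ∈ Ω, f ω) / Ω.card

/-- Discrete gradient `(∇^{ij} f)(ω) = f(ω^{ij}) - f(ω)`. -/
noncomputable def grad {L n : ℕ} (i j : Fin n) (f : (Fin n → Fin L) → ℝ)
    (ω : Fin n → Fin L) : ℝ :=
  f (ω ∘ Equiv.swap i j) - f ω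

/-- The Dirichlet form `𝔈_κ(f,g) = (1/(2n)) Σ_{i<j} E[(∇^{ij}f)(∇^{ij}g)]`. -/
noncomputable def dirichlet {L n : ℕ} (Ω : Finset (Fin n → Fin L))
    (f g : (Fin n → Fin L) → ℝ) : ℝ :=
  (1 / (2 * (n : ℝ))) *
    ∑ p ∈ Finset.univ.filter (fun p : Fin n × Fin n => p.1 < p.2),
      expect Ω fun ω => grad p.1 p.2 f ω * grad p.1 p.2 g ω

/-- The weighted Dirichlet form `𝔈^G_κ(f,g) = (1/2) Σ_{i<j} G_{ij} E[(∇^{ij}f)(∇^{ij}g)]`. -/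
noncomputable def wDirichlet {L n : ℕ} (G : Fin n → Fin n → ℝ)
    (Ω : Finset (Fin n → Fin L)) (f g : (Fin n → Fin L) → ℝ) : ℝ :=
  (1 / 2) *
    ∑ p ∈ Finset.univ.filter (fun p : Fin n × Fin n => p.1 < p.2),
      G p.1 p.2 * expect Ω fun ω => grad p.1 p.2 f ω * grad p.1 p.2 g ω

/-- Entropy `Ent(f) = E[f log f] - E[f] log E[f]` (note `Real.log 0 = 0`). -/
noncomputable def entropy {L n : ℕ} (Ω : Finset (Fin n → Fin L))
    (f : (Fin n → Fin L) → ℝ) : ℝ :=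
  expect Ω (fun ω => f ω * Real.log (f ω)) - expect Ω f * Real.log (expect Ω f)

/-- Variance `Var(f) = E[f²] - (E[f])²`. -/
noncomputable def variance {L n : ℕ} (Ω : Finset (Fin n → Fin L))
    (f : (Fin n → Fin L) → ℝ) : ℝ :=
  expect Ω (fun ω => f ω ^ 2) - (expect Ω f) ^ 2

/-- The edge boundary `∂A` of `A ⊆ Ω`: edges (recorded as pairs with first endpoint
in `A` and second endpoint in `Ω \ A`) between `A` and its complement, where two
states are adjacent when they differ in exactly two coordinates. -/
def edgeBoundary {L n : ℕ} (Ω A : Finset (Fin n → Fin L)) :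
    Finset ((Fin n → Fin L) × (Fin n → Fin L)) :=
  (A ×ˢ (Ω \ A)).filter fun p => (Finset.univ.filter fun i => p.1 i ≠ p.2 i).card = 2

/-- The `ℓ`-colored region `ξ_ℓ(ω) = {i : ω i = ℓ}`. -/
def xi {L n : ℕ} (ℓ : Fin L) (ω : Fin n → Fin L) : Finset (Fin n) :=
  Finset.univ.filter fun i => ω i = ℓ

/-- The parameter `κ^{∖ℓ}` obtained from `κ` by removing the `ℓ`-th entry. -/
def removeIdx {L : ℕ} (κ : Fin L → ℕ) (ℓ : Fin L) (m : Fin (L - 1)) : ℕ :=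
  if (m : ℕ) < (ℓ : ℕ) then κ ⟨m, by have := m.isLt; omega⟩
  else κ ⟨(m : ℕ) + 1, by have := m.isLt; omega⟩

/-!
Test the inequality on `f = 1{ω i₀ = ℓ₀}`, where `ℓ₀` is a rarest color. Then `√f = f` and
`f log f = 0`, so with `p = E f = κmin / n` the entropy is `-p log p = p log (n / κmin)`. Only
transpositions moving `i₀` change `f`, each contributes at most `E[f(ω^{ij}) + f(ω)] = 2p`, and
the weights at `i₀` sum to one, so `𝔈(√f, √f) ≤ p`. Hence `p log (n / κmin) ≤ τ p`.
-/

section Expect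

variable {L n : ℕ} (Ω : Finset (Fin n → Fin L))

lemma expect_nonneg {f : (Fin n → Fin L) → ℝ} (hf : ∀ ω ∈ Ω, 0 ≤ f ω) : 0 ≤ expect Ω f :=
  div_nonneg (sum_nonneg hf) (Nat.cast_nonneg _)

lemma expect_mono {f g : (Fin n → Fin L) → ℝ} (h : ∀ ω ∈ Ω, f ω ≤ g ω) :
    expect Ω f ≤ expect Ω g :=
  div_le_div_of_nonneg_right (sum_le_sum h) (Nat.cast_nonneg _)

lemma expect_add (f g : (Fin n → Fin L) → ℝ) :
    expect Ω (fun ω => f ω + g ω) = expect Ω f + expect Ω g := by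
  simp only [expect, sum_add_distrib, add_div]

lemma entropy_of_mul_log_eq_zero {f : (Fin n → Fin L) → ℝ}
    (hf : ∀ ω, f ω * Real.log (f ω) = 0) :
    entropy Ω f = -(expect Ω f * Real.log (expect Ω f)) := by
  simp [entropy, expect, hf]

lemma wDirichlet_self_nonneg {G : Fin n → Fin n → ℝ} (hG : ∀ i j, 0 ≤ G i j)
    (f : (Fin n → Fin L) → ℝ) : 0 ≤ wDirichlet G Ω f f :=
  mul_nonneg (by norm_num) <| sum_nonneg fun _ _ =>
    mul_nonneg (hG _ _) (expect_nonneg Ω fun _ _ => mul_self_nonneg _)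

end Expect

section Slice

variable {L n : ℕ} {κ : Fin L → ℕ}

lemma comp_perm_mem_slice (σ : Equiv.Perm (Fin n)) {ω : Fin n → Fin L}
    (hω : ω ∈ slice L n κ) : ω ∘ σ ∈ slice L n κ := by
  simp only [slice, mem_filter, mem_univ, true_and] at hω ⊢
  intro ℓ
  rw [← hω ℓ]
  exact card_equiv σ (by simp)

lemma slice_nonempty (hn : n = ∑ ℓ, κ ℓ) : (slice L n κ).Nonempty := by
  subst hn
  refine ⟨fun i => (finSigmaFinEquiv.symm i).1, ?_⟩
  simp only [slice, mem_filter, mem_univ, true_and]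
  intro ℓ
  rw [← card_equiv (s := univ.filter fun s : (ℓ : Fin L) × Fin (κ ℓ) => s.1 = ℓ)
    finSigmaFinEquiv (by simp)]
  rw [card_filter, Fintype.sum_sigma]
  simp [apply_ite]

lemma sum_slice_comp_perm (σ : Equiv.Perm (Fin n)) (f : (Fin n → Fin L) → ℝ) :
    ∑ ω ∈ slice L n κ, f (ω ∘ σ) = ∑ ω ∈ slice L n κ, f ω :=
  sum_nbij' (· ∘ σ) (· ∘ σ.symm) (fun _ => comp_perm_mem_slice σ)
    (fun _ => comp_perm_mem_slice σ.symm) (fun _ _ => by ext; simp) (fun _ _ => by ext; simp)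
    (fun _ _ => rfl)

lemma expect_slice_comp_perm (σ : Equiv.Perm (Fin n)) (f : (Fin n → Fin L) → ℝ) :
    expect (slice L n κ) (fun ω => f (ω ∘ σ)) = expect (slice L n κ) f := by
  rw [expect, expect, sum_slice_comp_perm]

end Slice

section IndicatorAt

variable {L n : ℕ} {κ : Fin L → ℕ}

def indicatorAt (i : Fin n) (ℓ : Fin L) (ω : Fin n → Fin L) : ℝ :=
  if ω i = ℓ then 1 else 0

lemma indicatorAt_nonneg (i : Fin n) (ℓ : Fin L) (ω : Fin n → Fin L) :
    0 ≤ indicatorAt i ℓ ω := by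
  unfold indicatorAt; split_ifs <;> norm_num

lemma sqrt_indicatorAt (i : Fin n) (ℓ : Fin L) :
    (fun ω => Real.sqrt (indicatorAt i ℓ ω)) = indicatorAt i ℓ := by
  ext ω; unfold indicatorAt; split_ifs <;> simp

lemma indicatorAt_mul_log_eq_zero (i : Fin n) (ℓ : Fin L) (ω : Fin n → Fin L) :
    indicatorAt i ℓ ω * Real.log (indicatorAt i ℓ ω) = 0 := by
  unfold indicatorAt; split_ifs <;> simp

lemma grad_indicatorAt_eq_zero {i a b : Fin n} (ha : a ≠ i) (hb : b ≠ i) (ℓ : Fin L)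
    (ω : Fin n → Fin L) : grad a b (indicatorAt i ℓ) ω = 0 := by
  simp [grad, indicatorAt, Equiv.swap_apply_of_ne_of_ne ha.symm hb.symm]

lemma grad_indicatorAt_mul_self_le (i a b : Fin n) (ℓ : Fin L) (ω : Fin n → Fin L) :
    grad a b (indicatorAt i ℓ) ω * grad a b (indicatorAt i ℓ) ω
      ≤ indicatorAt i ℓ (ω ∘ Equiv.swap a b) + indicatorAt i ℓ ω := by
  unfold grad indicatorAt; split_ifs <;> norm_num

lemma expect_indicatorAt_slice (hn : n = ∑ ℓ, κ ℓ) (i : Fin n) (ℓ : Fin L) :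
    expect (slice L n κ) (indicatorAt i ℓ) = κ ℓ / n := by
  -- The marginals `P(ω j = ℓ)` do not depend on `j` and add up to `κ ℓ`.
  have hsymm : ∀ j, expect (slice L n κ) (indicatorAt j ℓ)
      = expect (slice L n κ) (indicatorAt i ℓ) := fun j => by
    rw [← expect_slice_comp_perm (Equiv.swap i j) (indicatorAt j ℓ)]
    congr 1
    ext ω
    simp [indicatorAt]
  have hcount : ∀ ω ∈ slice L n κ, ∑ j, indicatorAt j ℓ ω = κ ℓ := fun ω hω => by
    simp only [slice, mem_filter, mem_univ, true_and] at hω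
    simp [indicatorAt, sum_boole, hω ℓ]
  have hcard : ((slice L n κ).card : ℝ) ≠ 0 := by
    exact_mod_cast (slice_nonempty hn).card_pos.ne'
  have hsum : ∑ j, expect (slice L n κ) (indicatorAt j ℓ) = κ ℓ := by
    simp only [expect, ← sum_div]
    rw [sum_comm, sum_congr rfl hcount, sum_const, nsmul_eq_mul, mul_div_cancel_left₀ _ hcard]
  have hn0 : (n : ℝ) ≠ 0 := by exact_mod_cast (Fin.pos i).ne'
  rw [← hsum, sum_congr rfl fun j _ => hsymm j, sum_const, card_univ, Fintype.card_fin,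
    nsmul_eq_mul, mul_div_cancel_left₀ _ hn0]

lemma expect_grad_indicatorAt_le (i a b : Fin n) (ℓ : Fin L) :
    expect (slice L n κ) (fun ω => grad a b (indicatorAt i ℓ) ω * grad a b (indicatorAt i ℓ) ω)
      ≤ 2 * expect (slice L n κ) (indicatorAt i ℓ) := by
  calc _ ≤ expect (slice L n κ)
        (fun ω => indicatorAt i ℓ (ω ∘ Equiv.swap a b) + indicatorAt i ℓ ω) :=
        expect_mono _ fun ω _ => grad_indicatorAt_mul_self_le i a b ℓ ω
    _ = 2 * expect (slice L n κ) (indicatorAt i ℓ) := by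
        rw [expect_add, expect_slice_comp_perm (Equiv.swap a b) (indicatorAt i ℓ)]; ring

lemma entropy_indicatorAt_slice (hn : n = ∑ ℓ, κ ℓ) (i : Fin n) (ℓ : Fin L) :
    entropy (slice L n κ) (indicatorAt i ℓ) = κ ℓ / n * Real.log (n / κ ℓ) := by
  rw [entropy_of_mul_log_eq_zero _ (indicatorAt_mul_log_eq_zero i ℓ),
    expect_indicatorAt_slice hn, ← inv_div, Real.log_inv]
  ring

end IndicatorAt

lemma sum_filter_lt_add_swap_le_sum {ι : Type*} [Fintype ι] [LinearOrder ι] {F : ι → ι → ℝ}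
    (hF : ∀ a b, 0 ≤ F a b) :
    ∑ q ∈ univ.filter (fun q : ι × ι => q.1 < q.2), (F q.1 q.2 + F q.2 q.1)
      ≤ ∑ a, ∑ b, F a b := by
  have hswap : ∑ q ∈ univ.filter (fun q : ι × ι => q.1 < q.2), F q.2 q.1
      = ∑ q ∈ univ.filter (fun q : ι × ι => q.2 < q.1), F q.1 q.2 :=
    sum_equiv (Equiv.prodComm ι ι) (by simp) (fun _ _ => rfl)
  rw [sum_add_distrib, hswap, ← Fintype.sum_prod_type',
    ← sum_filter_add_sum_filter_not univ (fun q : ι × ι => q.1 < q.2)]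
  gcongr
  · exact fun q _ _ => hF _ _
  · exact fun h => h.not_gt

lemma wDirichlet_indicatorAt_le {L n : ℕ} {κ : Fin L → ℕ} {G : Fin n → Fin n → ℝ}
    (hG : ∀ a b, 0 ≤ G a b) (hGsymm : ∀ a b, G a b = G b a) (i : Fin n) (ℓ : Fin L) :
    wDirichlet G (slice L n κ) (indicatorAt i ℓ) (indicatorAt i ℓ)
      ≤ (∑ j, G i j) * expect (slice L n κ) (indicatorAt i ℓ) := by
  set p := expect (slice L n κ) (indicatorAt i ℓ)
  have hp : 0 ≤ p := expect_nonneg _ fun ω _ => indicatorAt_nonneg i ℓ ω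
  -- Charging each pair `{a, b}` through `i` to its ordered version starting at `i` turns the sum
  -- over `a < b` into a row sum of `G`.
  let F (a b : Fin n) : ℝ := if a = i then G a b else 0
  have hF : ∀ a b, 0 ≤ F a b := fun a b => by simp only [F]; split_ifs <;> simp [hG]
  have hterm : ∀ q : Fin n × Fin n,
      G q.1 q.2 * expect (slice L n κ)
          (fun ω => grad q.1 q.2 (indicatorAt i ℓ) ω * grad q.1 q.2 (indicatorAt i ℓ) ω)
        ≤ 2 * p * (F q.1 q.2 + F q.2 q.1) := fun q => by
    by_cases hq : q.1 = i ∨ q.2 = i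
    · have hGF : G q.1 q.2 ≤ F q.1 q.2 + F q.2 q.1 := by
        obtain ⟨a, b⟩ := q
        have hab := hF a b
        have hba := hF b a
        rcases hq with rfl | rfl
        · simp only [F, if_true] at hba ⊢; linarith
        · simp only [F, if_true, hGsymm a b] at hab ⊢; linarith
      calc _ ≤ G q.1 q.2 * (2 * p) :=
            mul_le_mul_of_nonneg_left (expect_grad_indicatorAt_le i q.1 q.2 ℓ) (hG _ _)
        _ ≤ (F q.1 q.2 + F q.2 q.1) * (2 * p) := mul_le_mul_of_nonneg_right hGF (by positivity)
        _ = 2 * p * (F q.1 q.2 + F q.2 q.1) := by ring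
    · rw [not_or] at hq
      simp [grad_indicatorAt_eq_zero hq.1 hq.2, expect, F, hq.1, hq.2]
  calc wDirichlet G (slice L n κ) (indicatorAt i ℓ) (indicatorAt i ℓ)
      ≤ 1 / 2 * ∑ q ∈ univ.filter (fun q : Fin n × Fin n => q.1 < q.2),
          2 * p * (F q.1 q.2 + F q.2 q.1) :=
        mul_le_mul_of_nonneg_left (sum_le_sum fun q _ => hterm q) (by norm_num)
    _ = p * ∑ q ∈ univ.filter (fun q : Fin n × Fin n => q.1 < q.2), (F q.1 q.2 + F q.2 q.1) := by
        rw [← mul_sum]; ring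
    _ ≤ p * ∑ a, ∑ b, F a b := mul_le_mul_of_nonneg_left (sum_filter_lt_add_swap_le_sum hF) hp
    _ = (∑ j, G i j) * p := by simp [F, mul_comm]

lemma sum_adj_div_degree_le_one {n d : ℕ} {H : SimpleGraph (Fin n)} [DecidableRel H.Adj]
    (hreg : H.IsRegularOfDegree d) (i : Fin n) :
    ∑ j, (if H.Adj i j then (1 : ℝ) / d else 0) ≤ 1 := by
  rw [sum_ite, sum_const_zero, add_zero, sum_const, ← H.neighborFinset_eq_filter,
    H.card_neighborFinset_eq_degree, hreg i, nsmul_eq_mul, mul_one_div]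
  exact div_le_one_of_le₀ le_rfl (Nat.cast_nonneg d)

lemma wDirichlet_regular_indicatorAt_le {L n d : ℕ} {κ : Fin L → ℕ} {H : SimpleGraph (Fin n)}
    [DecidableRel H.Adj] (hreg : H.IsRegularOfDegree d) (hn : n = ∑ ℓ, κ ℓ) (i : Fin n)
    (ℓ : Fin L) :
    wDirichlet (fun a b => if H.Adj a b then (1 : ℝ) / d else 0) (slice L n κ)
      (indicatorAt i ℓ) (indicatorAt i ℓ) ≤ κ ℓ / n := by
  refine (wDirichlet_indicatorAt_le (fun a b => by split_ifs <;> positivity)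
    (fun a b => by simp only [H.adj_comm]) i ℓ).trans ?_
  rw [expect_indicatorAt_slice hn]
  exact mul_le_of_le_one_left (by positivity) (sum_adj_div_degree_le_one hreg i)

theorem colored_exclusion_logSobolev_lower_general
    (L : ℕ) (hL : 2 ≤ L) (κ : Fin L → ℕ) (hκ : ∀ ℓ, 0 < κ ℓ)
    (n : ℕ) (hn : n = ∑ ℓ, κ ℓ)
    (κmin : ℕ) (hmem : ∃ ℓ, κ ℓ = κmin)
    (d : ℕ)
    (H : SimpleGraph (Fin n)) [DecidableRel H.Adj] (hreg : H.IsRegularOfDegree d)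
    (τ : ℝ)
    (hτ : ∀ f : (Fin n → Fin L) → ℝ, (∀ ω, 0 ≤ f ω) →
      entropy (slice L n κ) f ≤
        τ * wDirichlet (fun i j => if H.Adj i j then (1 : ℝ) / (d : ℝ) else 0)
          (slice L n κ)
          (fun ω => Real.sqrt (f ω)) (fun ω => Real.sqrt (f ω))) :
    Real.log ((n : ℝ) / (κmin : ℝ)) ≤ τ := by
  obtain ⟨ℓ₀, rfl⟩ := hmem
  obtain ⟨ℓ₁, hℓ₁⟩ := Fintype.exists_ne_of_one_lt_card (by simpa using (by omega : 1 < L)) ℓ₀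
  have hlt : κ ℓ₀ < n :=
    hn ▸ single_lt_sum hℓ₁ (mem_univ _) (mem_univ _) (hκ ℓ₁) fun _ _ _ => Nat.zero_le _
  let i₀ : Fin n := ⟨0, by omega⟩
  have key := hτ (indicatorAt i₀ ℓ₀) (indicatorAt_nonneg i₀ ℓ₀)
  rw [sqrt_indicatorAt, entropy_indicatorAt_slice hn] at key
  have hW := wDirichlet_regular_indicatorAt_le hreg hn i₀ ℓ₀
  have hG : ∀ a b : Fin n, 0 ≤ if H.Adj a b then (1 : ℝ) / d else 0 := fun a b => by
    split_ifs <;> positivity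
  have hW0 := wDirichlet_self_nonneg (slice L n κ) hG (indicatorAt i₀ ℓ₀)
  have hp : (0 : ℝ) < κ ℓ₀ / n := div_pos (by exact_mod_cast hκ ℓ₀) (by exact_mod_cast i₀.pos)
  have hlog : 0 < Real.log (n / κ ℓ₀) :=
    Real.log_pos <| (one_lt_div (by exact_mod_cast hκ ℓ₀)).mpr (by exact_mod_cast hlt)
  have hτ0 : 0 ≤ τ := by nlinarith
  exact le_of_mul_le_mul_left (by nlinarith) hp

/-- lower bound on the log-Sobolev constant of the colored
exclusion process on a `d`-regular graph. -/
theorem colored_exclusion_logSobolev_lower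
    (L : ℕ) (hL : 2 ≤ L) (κ : Fin L → ℕ) (hκ : ∀ ℓ, 0 < κ ℓ)
    (n : ℕ) (hn : n = ∑ ℓ, κ ℓ)
    (κmin : ℕ) (hmin : ∀ ℓ, κmin ≤ κ ℓ) (hmem : ∃ ℓ, κ ℓ = κmin)
    (d : ℕ) (hd : 1 ≤ d)
    (H : SimpleGraph (Fin n)) [DecidableRel H.Adj] (hreg : H.IsRegularOfDegree d)
    (τ : ℝ)
    (hτ : ∀ f : (Fin n → Fin L) → ℝ, (∀ ω, 0 ≤ f ω) →
      entropy (slice L n κ) f ≤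
        τ * wDirichlet (fun i j => if H.Adj i j then (1 : ℝ) / (d : ℝ) else 0)
          (slice L n κ)
          (fun ω => Real.sqrt (f ω)) (fun ω => Real.sqrt (f ω))) :
    Real.log ((n : ℝ) / (κmin : ℝ)) ≤ τ :=
  colored_exclusion_logSobolev_lower_general L hL κ hκ n hn κmin hmem d H hreg τ hτ

end Multislice
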